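/- Suppose a finite group G acts on a compact path-connected space X fixing a point pt ∈ X. Then the short exact sequence of G-modules 0 → C(X,ℝ)/Z → C(X,U(1)) → H¹(X;Z) → 0 (arising from the exponential sequence) splits as G-modules. -/

import Mathlib

/-- The multiplicative group structure that `M ≃+ M` (= `AddAut M`) carried in the older
Mathlib (`AddAut.group`): `g * h = h.trans g`, `1 = refl`, `g⁻¹ = g.symm`. -/
instance addEquivSelfGroupOld (M : Type*) [Add M] : Group (M ≃+ M) where
  mul g h := AddEquiv.trans h g
  one := AddEquiv.refl _
  inv := AddEquiv.symm
  mul_assoc _ _ _ := rfl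
  one_mul _ := rfl
  mul_one _ := rfl
  inv_mul_cancel := AddEquiv.self_trans_symm

/-!
Restricting to circle-valued functions vanishing at the fixed point `pt` keeps `π` surjective and
replaces the kernel `C(X,ℝ)/ℤ`, whose constants ℚ/ℤ are torsion, by the real functions vanishing
at `pt` (a lift through the covering `ℝ → ℝ/ℤ` is determined by its value at `pt`): a uniquely
divisible group. For a surjection of `G`-modules onto a free abelian group with uniquely
`|G|`-divisible kernel, pick any additive section `s₀`; the sum `t` of its conjugates
`g ∘ s₀ ∘ g⁻¹` is equivariant with `π ∘ t = |G|`, and `s₀ + (t - |G| • s₀) / |G|`, the division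
taking place in the kernel, is an equivariant section.
-/

section UniquelyDivisible

variable {M A : Type*} [AddCommGroup M] [AddCommGroup A] {K : AddSubgroup A} {n : ℕ}

theorem exists_addMonoidHom_nsmul_eq (hdiv : ∀ a ∈ K, ∃ b ∈ K, n • b = a)
    (htors : ∀ a ∈ K, n • a = 0 → a = 0) (φ : M →+ A) (hφ : ∀ m, φ m ∈ K) :
    ∃ d : M →+ A, ∀ m, d m ∈ K ∧ n • d m = φ m := by
  choose d hdK hd using fun m => hdiv (φ m) (hφ m)
  have hd_add : ∀ m m', d (m + m') = d m + d m' := fun m m' =>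
    sub_eq_zero.mp <| htors _ (sub_mem (hdK _) (add_mem (hdK m) (hdK m'))) <| by
      rw [nsmul_sub, nsmul_add, hd, hd, hd, map_add, sub_self]
  exact ⟨AddMonoidHom.mk' d hd_add, fun m => ⟨hdK m, hd m⟩⟩

end UniquelyDivisible

theorem apply_apply_eq_mul_apply {G B : Type*} [Monoid G] [AddCommGroup B]
    (τ : G →* AddMonoid.End B) (g h : G) (b : B) : τ g (τ h b) = τ (g * h) b := by
  rw [map_mul, AddMonoid.End.coe_mul, Function.comp_apply]

section EquivariantSection

variable {G A M : Type*} [Group G] [Fintype G] [AddCommGroup A] [AddCommGroup M]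
  {ρ : G →* AddMonoid.End A} {σ : G →* AddMonoid.End M} {π : A →+ M}

variable (ρ σ) in
def conjSum (s : M →+ A) : M →+ A :=
  ∑ g : G, AddMonoidHom.comp (ρ g) (s.comp (σ g⁻¹))

theorem conjSum_apply (s : M →+ A) (m : M) :
    conjSum ρ σ s m = ∑ g : G, ρ g (s (σ g⁻¹ m)) := by
  rw [conjSum, AddMonoidHom.finsetSum_apply]
  rfl

theorem map_conjSum (hπ : ∀ g a, π (ρ g a) = σ g (π a)) {s : M →+ A}
    (hs : ∀ m, π (s m) = m) (m : M) :
    π (conjSum ρ σ s m) = Fintype.card G • m := by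
  simp [conjSum_apply, hπ, hs, apply_apply_eq_mul_apply]

theorem apply_conjSum (s : M →+ A) (g : G) (m : M) :
    ρ g (conjSum ρ σ s m) = conjSum ρ σ s (σ g m) := by
  rw [conjSum_apply, conjSum_apply, map_sum]
  refine Fintype.sum_equiv (Equiv.mulLeft g) _ _ fun h => ?_
  rw [Equiv.coe_mulLeft, apply_apply_eq_mul_apply, apply_apply_eq_mul_apply, mul_inv_rev,
    inv_mul_cancel_right]

theorem exists_equivariant_section [Module.Projective ℤ M] (hsurj : Function.Surjective π)
    (hπ : ∀ g a, π (ρ g a) = σ g (π a))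
    (hdiv : ∀ a ∈ π.ker, ∃ b ∈ π.ker, Fintype.card G • b = a)
    (htors : ∀ a ∈ π.ker, Fintype.card G • a = 0 → a = 0) :
    ∃ s : M →+ A, (∀ m, π (s m) = m) ∧ ∀ g m, ρ g (s m) = s (σ g m) := by
  obtain ⟨s₀, hs₀⟩ : ∃ s₀ : M →+ A, ∀ m, π (s₀ m) = m := by
    obtain ⟨s₀, hs₀⟩ := Module.projective_lifting_property π.toIntLinearMap LinearMap.id hsurj
    exact ⟨s₀, LinearMap.congr_fun hs₀⟩
  set t := conjSum ρ σ s₀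
  obtain ⟨d, hd⟩ := exists_addMonoidHom_nsmul_eq hdiv htors (t - Fintype.card G • s₀) fun m => by
    simp [t, map_conjSum hπ hs₀, hs₀]
  set s := s₀ + d
  have hs (m : M) : π (s m) = m := by simp [s, hs₀, (AddMonoidHom.mem_ker.mp (hd m).1)]
  have hns (m : M) : Fintype.card G • s m = t m := by simp [s, (hd m).2]
  -- the defect `ρ g ∘ s - s ∘ σ g` lies in the kernel and is killed by `|G|`
  refine ⟨s, hs, fun g m => sub_eq_zero.mp <| htors _ ?_ ?_⟩
  · simp [hπ, hs]
  · rw [nsmul_sub, ← map_nsmul, hns, hns, apply_conjSum, sub_self]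

end EquivariantSection

def addEquivToEnd (M : Type*) [AddZeroClass M] : (M ≃+ M) →* AddMonoid.End M where
  toFun e := e.toAddMonoidHom
  map_one' := rfl
  map_mul' _ _ := rfl

section BasedMaps

variable {X : Type*} [TopologicalSpace X] (Y : Type*) [TopologicalSpace Y] [AddCommGroup Y]
  [IsTopologicalAddGroup Y]

def basedMaps (x₀ : X) : AddSubgroup C(X, Y) where
  carrier := {f | f x₀ = 0}
  add_mem' hf hf' := by simp_all
  zero_mem' := rfl
  neg_mem' hf := by simp_all

variable {Y}

@[simp] theorem mem_basedMaps {x₀ : X} {f : C(X, Y)} : f ∈ basedMaps Y x₀ ↔ f x₀ = 0 := Iff.rfl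

def basedPullback {G : Type*} [Group G] [MulAction G X]
    (hcont : ∀ g : G, Continuous fun x : X => g • x) {x₀ : X} (hx₀ : ∀ g : G, g • x₀ = x₀) :
    G →* AddMonoid.End (basedMaps Y x₀) where
  toFun g := ((ContinuousMap.compAddMonoidHom' ⟨fun x => g⁻¹ • x, hcont g⁻¹⟩).comp
    (basedMaps Y x₀).subtype).codRestrict _ fun f => by
      change f.1 (g⁻¹ • x₀) = 0
      rw [hx₀]
      exact f.2
  map_one' := by
    ext f x
    change f.1 ((1 : G)⁻¹ • x) = f.1 x
    rw [inv_one, one_smul]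
  map_mul' g h := by
    ext f x
    change f.1 ((g * h)⁻¹ • x) = f.1 (h⁻¹ • g⁻¹ • x)
    rw [mul_inv_rev, mul_smul]

end BasedMaps

section AddCircle

variable {X : Type*} [TopologicalSpace X] {p : ℝ}

def LiftsToReal (f : C(X, AddCircle p)) : Prop := ∃ F : C(X, ℝ), ∀ x, f x = F x

theorem ContinuousMap.eq_zero_of_coe_addCircle_eq_zero [PreconnectedSpace X] {F : C(X, ℝ)}
    (hF : ∀ x, (F x : AddCircle p) = 0) {x₀ : X} (h₀ : F x₀ = 0) : F = 0 := by
  have := (AddCircle.isCoveringMap_coe p).eq_of_comp_eq F.continuous continuous_const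
    (funext fun x => by simp [hF]) x₀ h₀
  ext x
  exact congrFun this x

theorem LiftsToReal.exists_based {f : C(X, AddCircle p)} (hf : LiftsToReal f) {x₀ : X}
    (h₀ : f x₀ = 0) : ∃ F : C(X, ℝ), F x₀ = 0 ∧ ∀ x, f x = F x := by
  obtain ⟨F, hF⟩ := hf
  refine ⟨F - .const X (F x₀), by simp, fun x => ?_⟩
  simp [← hF, h₀]

theorem LiftsToReal.exists_nsmul_eq {f : C(X, AddCircle p)} (hf : LiftsToReal f) {x₀ : X}
    (h₀ : f x₀ = 0) {n : ℕ} (hn : n ≠ 0) :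
    ∃ b : C(X, AddCircle p), LiftsToReal b ∧ b x₀ = 0 ∧ n • b = f := by
  obtain ⟨F, hF₀, hF⟩ := hf.exists_based h₀
  let B : C(X, ℝ) := (n : ℝ)⁻¹ • F
  refine ⟨⟨fun x => (B x : AddCircle p), (AddCircle.continuous_mk' p).comp B.continuous⟩,
    ⟨B, fun _ => rfl⟩, by simp [B, hF₀], ?_⟩
  ext x
  simp [B, hF, ← AddCircle.coe_nsmul, hn]

theorem LiftsToReal.eq_zero_of_nsmul_eq_zero [PreconnectedSpace X] {f : C(X, AddCircle p)}
    (hf : LiftsToReal f) {x₀ : X} (h₀ : f x₀ = 0) {n : ℕ} (hn : n ≠ 0) (hnf : n • f = 0) :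
    f = 0 := by
  obtain ⟨F, hF₀, hF⟩ := hf.exists_based h₀
  have hnF : n • F = 0 := ContinuousMap.eq_zero_of_coe_addCircle_eq_zero (x₀ := x₀)
    (fun x => by simpa [hF, AddCircle.coe_nsmul] using congr($hnf x)) (by simp [hF₀])
  have hF0 : F = 0 := by
    ext x
    simpa [hn] using congr($hnF x)
  ext x
  simp [hF, hF0]

end AddCircle

section ExponentialSequence

variable {X M : Type*} [TopologicalSpace X] [AddCommGroup M] {p : ℝ}
  {π : C(X, AddCircle p) →+ M}

theorem surjective_comp_basedMaps (hker : ∀ f, π f = 0 ↔ LiftsToReal f) (x₀ : X)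
    (hsurj : Function.Surjective π) :
    Function.Surjective (π.comp (basedMaps _ x₀).subtype) := by
  intro m
  obtain ⟨f, rfl⟩ := hsurj m
  obtain ⟨r, hr⟩ := QuotientAddGroup.mk_surjective (f x₀)
  have hc : π (.const X (f x₀)) = 0 := (hker _).2 ⟨.const X r, fun _ => hr.symm⟩
  exact ⟨⟨f - .const X (f x₀), by simp⟩, by simp [hc]⟩

theorem ker_comp_basedMaps_divisible (hker : ∀ f, π f = 0 ↔ LiftsToReal f) (x₀ : X) {n : ℕ}
    (hn : n ≠ 0) :
    ∀ a ∈ (π.comp (basedMaps _ x₀).subtype).ker,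
      ∃ b ∈ (π.comp (basedMaps _ x₀).subtype).ker, n • b = a := by
  rintro ⟨f, hf₀⟩ hf
  obtain ⟨b, hb, hb₀, rfl⟩ := ((hker f).1 hf).exists_nsmul_eq hf₀ hn
  exact ⟨⟨b, hb₀⟩, (hker b).2 hb, rfl⟩

theorem ker_comp_basedMaps_torsionFree [PreconnectedSpace X]
    (hker : ∀ f, π f = 0 ↔ LiftsToReal f) (x₀ : X) {n : ℕ} (hn : n ≠ 0) :
    ∀ a ∈ (π.comp (basedMaps _ x₀).subtype).ker, n • a = 0 → a = 0 := by
  rintro ⟨f, hf₀⟩ hf hnf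
  exact Subtype.ext (((hker f).1 hf).eq_zero_of_nsmul_eq_zero hf₀ hn congr(Subtype.val $hnf))

end ExponentialSequence

theorem stmt3_general (G X : Type) [Group G] [Finite G] [TopologicalSpace X]
    [PathConnectedSpace X] [MulAction G X]
    (hcont : ∀ g : G, Continuous fun x : X => g • x)
    (pt : X) (hpt : ∀ g : G, g • pt = pt)
    (M : Type) [AddCommGroup M] [Module.Free ℤ M]
    (σM : G →* (M ≃+ M))
    (π : C(X, AddCircle (1 : ℝ)) →+ M)
    (hsurj : Function.Surjective π)
    (hker : ∀ f : C(X, AddCircle (1 : ℝ)),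
      π f = 0 ↔ ∃ F : C(X, ℝ), ∀ x, f x = (F x : AddCircle (1 : ℝ)))
    (hequiv : ∀ (g : G) (f : C(X, AddCircle (1 : ℝ))),
      π (f.comp ⟨fun x => g⁻¹ • x, hcont g⁻¹⟩) = σM g (π f)) :
    ∃ s : M →+ C(X, AddCircle (1 : ℝ)),
      (∀ m, π (s m) = m) ∧
      ∀ (g : G) (m : M), (s m).comp ⟨fun x => g⁻¹ • x, hcont g⁻¹⟩ = s (σM g m) := by
  cases nonempty_fintype G
  have hn : Fintype.card G ≠ 0 := Fintype.card_ne_zero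
  obtain ⟨s, hsπ, hsρ⟩ := exists_equivariant_section (ρ := basedPullback hcont hpt)
    (σ := (addEquivToEnd M).comp σM) (surjective_comp_basedMaps hker pt hsurj)
    (fun g f => hequiv g f) (ker_comp_basedMaps_divisible hker pt hn)
    (ker_comp_basedMaps_torsionFree hker pt hn)
  exact ⟨(basedMaps _ pt).subtype.comp s, hsπ, fun g m => congr(Subtype.val $(hsρ g m))⟩

/-- Let a finite group `G` act continuously on a compact path-connected
space `X`, fixing a point `pt`.  Consider the exact sequence of `G`-modules
`0 → C(X,ℝ)/ℤ → C(X,U(1)) → H¹(X;ℤ) → 0` arising from the exponential sequence: here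
`U(1) = ℝ/ℤ`, the `G`-action on functions is pullback (`g • f = f ∘ (g⁻¹ • ·)`), `M` plays the
role of `H¹(X;ℤ)` (a free abelian group of finite rank, with `G`-action `σM`), the map
`π : C(X,U(1)) → M` is `G`-equivariant and surjective, and its kernel consists exactly of the
circle-valued functions which lift to real-valued continuous functions (i.e. the image of
`C(X,ℝ)`, whose quotient by the constants `ℤ` is the kernel).  Then the sequence splits as
`G`-modules: there is a `G`-equivariant additive section `s` of `π`. -/
theorem stmt3 (G X : Type) [Group G] [Finite G] [TopologicalSpace X] [CompactSpace X]
    [PathConnectedSpace X] [MulAction G X]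
    (hcont : ∀ g : G, Continuous fun x : X => g • x)
    (pt : X) (hpt : ∀ g : G, g • pt = pt)
    (M : Type) [AddCommGroup M] [Module.Free ℤ M] [Module.Finite ℤ M]
    (σM : G →* (M ≃+ M))
    (π : C(X, AddCircle (1 : ℝ)) →+ M)
    (hsurj : Function.Surjective π)
    (hker : ∀ f : C(X, AddCircle (1 : ℝ)),
      π f = 0 ↔ ∃ F : C(X, ℝ), ∀ x, f x = (F x : AddCircle (1 : ℝ)))
    (hequiv : ∀ (g : G) (f : C(X, AddCircle (1 : ℝ))),
      π (f.comp ⟨fun x => g⁻¹ • x, hcont g⁻¹⟩) = σM g (π f)) :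
    ∃ s : M →+ C(X, AddCircle (1 : ℝ)),
      (∀ m, π (s m) = m) ∧
      ∀ (g : G) (m : M), (s m).comp ⟨fun x => g⁻¹ • x, hcont g⁻¹⟩ = s (σM g m) :=
  stmt3_general G X hcont pt hpt M σM π hsurj hker hequiv
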